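/- arXiv:2307.16706 — 7 statements merged into one kernel-verified Lean document; each statement's English description precedes it below -/
import Mathlib

section
/- If D is a diagonal matrix with positive diagonal entries given by a stationary distribution d of the stochastic matrix P, and γ ∈ (0,1), then the matrix A = D(γP − I) satisfies A + Aᵀ ⪯ 2(γ−1)D, i.e., A + Aᵀ − 2(γ−1)D is negative semidefinite. -/
open Matrix

/-- If `D = diagonal d` where `d` is a positive stationary distribution of the
row-stochastic matrix `P`, and `γ ∈ (0,1)`, then `A = D(γP − I)` satisfies
`A + Aᵀ ⪯ 2(γ−1)D` in the Loewner order. -/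
theorem stmt0 (n : ℕ) (P : Matrix (Fin n) (Fin n) ℝ) (d : Fin n → ℝ) (γ : ℝ)
    (hPnonneg : ∀ i j, 0 ≤ P i j) (hProw : ∀ i, ∑ j, P i j = 1)
    (hdpos : ∀ i, 0 < d i) (hstat : ∀ j, ∑ i, d i * P i j = d j)
    (hγ0 : 0 < γ) (hγ1 : γ < 1) :
    ∀ x : Fin n → ℝ,
      x ⬝ᵥ ((Matrix.diagonal d * (γ • P - 1)
            + (Matrix.diagonal d * (γ • P - 1))ᵀ
            - (2 * (γ - 1)) • Matrix.diagonal d).mulVec x) ≤ 0 := by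
  intro x
  set S := ∑ i, ∑ j, d i * P i j * (x i * x j) with hS
  set Q := ∑ i, d i * x i ^ 2 with hQ
  -- F1: row sums
  have hF1 : ∑ i, ∑ j, d i * P i j * x i ^ 2 = Q := by
    refine Finset.sum_congr rfl fun i _ => ?_
    have : ∑ j, d i * P i j * x i ^ 2 = (∑ j, P i j) * (d i * x i ^ 2) := by
      rw [Finset.sum_mul]; exact Finset.sum_congr rfl fun j _ => by ring
    rw [this, hProw i, one_mul]
  -- F2: stationarity
  have hF2 : ∑ i, ∑ j, d i * P i j * x j ^ 2 = Q := by
    rw [Finset.sum_comm]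
    refine Finset.sum_congr rfl fun j _ => ?_
    have : ∑ i, d i * P i j * x j ^ 2 = (∑ i, d i * P i j) * x j ^ 2 := by
      rw [Finset.sum_mul]
    rw [this, hstat j]
  -- key inequality S ≤ Q
  have hkey : S ≤ Q := by
    have hnn : 0 ≤ ∑ i, ∑ j, d i * P i j * (x i - x j) ^ 2 := by
      refine Finset.sum_nonneg fun i _ => Finset.sum_nonneg fun j _ => ?_
      have := mul_nonneg (le_of_lt (hdpos i)) (hPnonneg i j)
      positivity
    have hexp : ∑ i, ∑ j, d i * P i j * (x i - x j) ^ 2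
        = (∑ i, ∑ j, d i * P i j * x i ^ 2)
          - 2 * (∑ i, ∑ j, d i * P i j * (x i * x j))
          + (∑ i, ∑ j, d i * P i j * x j ^ 2) := by
      rw [Finset.mul_sum, ← Finset.sum_sub_distrib, ← Finset.sum_add_distrib]
      refine Finset.sum_congr rfl fun i _ => ?_
      rw [Finset.mul_sum, ← Finset.sum_sub_distrib, ← Finset.sum_add_distrib]
      exact Finset.sum_congr rfl fun j _ => by ring
    rw [hexp, hF1, hF2, ← hS] at hnn
    linarith
  -- simplify the matrix
  have hM : Matrix.diagonal d * (γ • P - 1)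
        + (Matrix.diagonal d * (γ • P - 1))ᵀ
        - (2 * (γ - 1)) • Matrix.diagonal d
      = γ • (Matrix.diagonal d * P) + γ • (Matrix.diagonal d * P)ᵀ
        - (2 * γ) • Matrix.diagonal d := by
    have h1 : Matrix.diagonal d * (γ • P - 1)
        = γ • (Matrix.diagonal d * P) - Matrix.diagonal d := by
      rw [Matrix.mul_sub, Matrix.mul_one, Matrix.mul_smul]
    rw [h1]
    rw [Matrix.transpose_sub, Matrix.transpose_smul, Matrix.diagonal_transpose]
    ext i j
    simp [Matrix.sub_apply, Matrix.add_apply, Matrix.smul_apply]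
    ring
  rw [hM]
  -- compute the three quadratic forms
  have h3 : x ⬝ᵥ (Matrix.diagonal d).mulVec x = Q := by
    simp [dotProduct, Matrix.mulVec_diagonal, hQ]
    exact Finset.sum_congr rfl fun i _ => by ring
  have h1 : x ⬝ᵥ (Matrix.diagonal d * P).mulVec x = S := by
    simp only [dotProduct, Matrix.mulVec, Matrix.diagonal_mul, hS]
    refine Finset.sum_congr rfl fun i _ => ?_
    rw [Finset.mul_sum]
    exact Finset.sum_congr rfl fun j _ => by ring
  have h2 : x ⬝ᵥ ((Matrix.diagonal d * P)ᵀ).mulVec x = S := by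
    simp only [dotProduct, Matrix.mulVec, Matrix.transpose_apply, Matrix.diagonal_mul,
      Finset.mul_sum, hS]
    rw [Finset.sum_comm]
    exact Finset.sum_congr rfl fun i _ => Finset.sum_congr rfl fun j _ => by ring
  rw [Matrix.sub_mulVec, Matrix.add_mulVec, Matrix.smul_mulVec,
    Matrix.smul_mulVec, Matrix.smul_mulVec,
    dotProduct_sub, dotProduct_add, dotProduct_smul, dotProduct_smul, dotProduct_smul,
    h1, h2, h3]
  have : γ • S + γ • S - (2 * γ) • Q = 2 * γ * (S - Q) := by
    simp [smul_eq_mul]; ring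
  rw [this]
  have : 0 ≤ 2 * γ := by linarith
  nlinarith
end

section
/- Under the stated assumptions, the matrix Φᵀ D (γP − I) Φ is negative definite in the sense that xᵀ Φᵀ D (γP − I) Φ x < 0 for all nonzero x; in particular it is nonsingular (Hurwitz). -/
open Matrix

lemma keyneg (n : ℕ) (P : Matrix (Fin n) (Fin n) ℝ) (d : Fin n → ℝ) (γ : ℝ)
    (hPnonneg : ∀ i j, 0 ≤ P i j) (hProw : ∀ i, ∑ j, P i j = 1)
    (hdpos : ∀ i, 0 < d i) (hstat : ∀ j, ∑ i, d i * P i j = d j)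
    (hγ0 : 0 < γ) (hγ1 : γ < 1) :
    ∀ y : Fin n → ℝ, y ≠ 0 →
      y ⬝ᵥ ((Matrix.diagonal d * (γ • P - 1)).mulVec y) < 0 := by
  intro y hy
  have hT : 0 < ∑ i, d i * y i ^ 2 := by
    obtain ⟨i0, hi0⟩ := Function.ne_iff.mp hy
    apply Finset.sum_pos' (fun i _ => mul_nonneg (hdpos i).le (sq_nonneg _))
    exact ⟨i0, Finset.mem_univ _,
      mul_pos (hdpos i0) (by rw [sq]; exact mul_self_pos.mpr hi0)⟩
  have hQ : y ⬝ᵥ ((Matrix.diagonal d * (γ • P - 1)).mulVec y)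
      = γ * (∑ i, ∑ j, d i * P i j * y i * y j) - ∑ i, d i * y i ^ 2 := by
    simp only [dotProduct, mulVec, Matrix.mul_apply, Matrix.diagonal_apply,
      ite_mul, zero_mul, Finset.sum_ite_eq, Finset.mem_univ, if_true,
      Matrix.sub_apply, Matrix.smul_apply, Matrix.one_apply, smul_eq_mul]
    rw [Finset.mul_sum, ← Finset.sum_sub_distrib]
    refine Finset.sum_congr rfl fun i _ => ?_
    have key : ∀ j, y i * (d i * (γ * P i j - if i = j then 1 else 0) * y j)
        = γ * (d i * P i j * y i * y j) - (if i = j then d i * y i ^ 2 else 0) := by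
      intro j; by_cases h : i = j <;> simp [h] <;> ring
    rw [Finset.mul_sum, Finset.sum_congr rfl fun j _ => key j, Finset.sum_sub_distrib,
      Finset.sum_ite_eq Finset.univ i (fun _ => d i * y i ^ 2), ← Finset.mul_sum]
    simp
  -- bound the cross term
  have hS : (∑ i, ∑ j, d i * P i j * y i * y j) ≤ ∑ i, d i * y i ^ 2 := by
    have step : ∀ i j, d i * P i j * y i * y j
        ≤ d i * P i j * ((y i ^ 2 + y j ^ 2) / 2) := by
      intro i j
      have h1 : y i * y j ≤ (y i ^ 2 + y j ^ 2) / 2 := by nlinarith [sq_nonneg (y i - y j)]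
      have h2 : 0 ≤ d i * P i j := mul_nonneg (hdpos i).le (hPnonneg i j)
      calc d i * P i j * y i * y j = d i * P i j * (y i * y j) := by ring
        _ ≤ d i * P i j * ((y i ^ 2 + y j ^ 2) / 2) := by
            exact mul_le_mul_of_nonneg_left h1 h2
    calc (∑ i, ∑ j, d i * P i j * y i * y j)
        ≤ ∑ i, ∑ j, d i * P i j * ((y i ^ 2 + y j ^ 2) / 2) :=
          Finset.sum_le_sum fun i _ => Finset.sum_le_sum fun j _ => step i j
      _ = (∑ i, ∑ j, d i * P i j * y i ^ 2) / 2
          + (∑ i, ∑ j, d i * P i j * y j ^ 2) / 2 := by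
          have split : ∀ i j : Fin n, d i * P i j * ((y i ^ 2 + y j ^ 2) / 2)
              = d i * P i j * y i ^ 2 / 2 + d i * P i j * y j ^ 2 / 2 := by
            intro i j; ring
          simp only [split, Finset.sum_add_distrib, Finset.sum_div]
      _ = ∑ i, d i * y i ^ 2 := by
          have e1 : (∑ i, ∑ j, d i * P i j * y i ^ 2) = ∑ i, d i * y i ^ 2 := by
            refine Finset.sum_congr rfl fun i _ => ?_
            rw [show (∑ j, d i * P i j * y i ^ 2) = (∑ j, P i j) * (d i * y i ^ 2) from ?_,
              hProw i, one_mul]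
            rw [Finset.sum_mul]; exact Finset.sum_congr rfl fun j _ => by ring
          have e2 : (∑ i, ∑ j, d i * P i j * y j ^ 2) = ∑ j, d j * y j ^ 2 := by
            rw [Finset.sum_comm]
            refine Finset.sum_congr rfl fun j _ => ?_
            rw [show (∑ i, d i * P i j * y j ^ 2) = (∑ i, d i * P i j) * y j ^ 2 from ?_,
              hstat j]
            rw [Finset.sum_mul]
          rw [e1, e2]; ring
  rw [hQ]
  have : γ * (∑ i, ∑ j, d i * P i j * y i * y j) ≤ γ * ∑ i, d i * y i ^ 2 :=
    mul_le_mul_of_nonneg_left hS hγ0.le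
  nlinarith

/-- Under the stated assumptions, `ΦᵀD(γP−I)Φ` is negative definite in the
quadratic-form sense, and in particular nonsingular. -/
theorem stmt1 (n q : ℕ) (P : Matrix (Fin n) (Fin n) ℝ) (d : Fin n → ℝ) (γ : ℝ)
    (Φ : Matrix (Fin n) (Fin q) ℝ)
    (hPnonneg : ∀ i j, 0 ≤ P i j) (hProw : ∀ i, ∑ j, P i j = 1)
    (hdpos : ∀ i, 0 < d i) (hstat : ∀ j, ∑ i, d i * P i j = d j)
    (hγ0 : 0 < γ) (hγ1 : γ < 1)
    (hΦ : Function.Injective Φ.mulVec) :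
    (∀ x : Fin q → ℝ, x ≠ 0 →
        x ⬝ᵥ ((Φᵀ * Matrix.diagonal d * (γ • P - 1) * Φ).mulVec x) < 0)
    ∧ IsUnit (Φᵀ * Matrix.diagonal d * (γ • P - 1) * Φ) := by
  have key := keyneg n P d γ hPnonneg hProw hdpos hstat hγ0 hγ1
  have hneg : ∀ x : Fin q → ℝ, x ≠ 0 →
      x ⬝ᵥ ((Φᵀ * Matrix.diagonal d * (γ • P - 1) * Φ).mulVec x) < 0 := by
    intro x hx
    have hy : Φ.mulVec x ≠ 0 := fun h =>
      hx (hΦ (h.trans (Φ.mulVec_zero).symm))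
    have heq : x ⬝ᵥ ((Φᵀ * Matrix.diagonal d * (γ • P - 1) * Φ).mulVec x)
        = (Φ.mulVec x) ⬝ᵥ ((Matrix.diagonal d * (γ • P - 1)).mulVec (Φ.mulVec x)) := by
      rw [show Φᵀ * Matrix.diagonal d * (γ • P - 1) * Φ
          = Φᵀ * (Matrix.diagonal d * (γ • P - 1) * Φ) by
        rw [Matrix.mul_assoc, Matrix.mul_assoc, Matrix.mul_assoc]]
      rw [← Matrix.mulVec_mulVec, Matrix.dotProduct_mulVec, Matrix.vecMul_transpose,
        ← Matrix.mulVec_mulVec]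
    rw [heq]
    exact key _ hy
  refine ⟨hneg, ?_⟩
  rw [Matrix.isUnit_iff_isUnit_det, isUnit_iff_ne_zero]
  intro hdet
  obtain ⟨v, hv, hMv⟩ := (Matrix.exists_mulVec_eq_zero_iff).mpr hdet
  have h := hneg v hv
  rw [hMv, dotProduct_zero] at h
  exact lt_irrefl 0 h
end

section
/- The projected Bellman equation Φθ = Π(R + γPΦθ), with Π = Φ(ΦᵀDΦ)⁻¹ΦᵀD, has the unique solution θ* = −(ΦᵀD(γP − I)Φ)⁻¹ ΦᵀD R. -/
open Matrix

/-- Auxiliary: the quadratic form of `Φᵀ D B Φ` in terms of `y = Φ x`. -/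
lemma quad_form_eq {n q : ℕ} (d : Fin n → ℝ) (Φ : Matrix (Fin n) (Fin q) ℝ)
    (B : Matrix (Fin n) (Fin n) ℝ) (x : Fin q → ℝ) :
    x ⬝ᵥ (Φᵀ * Matrix.diagonal d * B * Φ).mulVec x
      = ∑ i, d i * (Φ.mulVec x i) * (B.mulVec (Φ.mulVec x)) i := by
  rw [← Matrix.mulVec_mulVec, ← Matrix.mulVec_mulVec, ← Matrix.mulVec_mulVec,
    Matrix.dotProduct_mulVec, Matrix.vecMul_transpose]
  simp only [dotProduct, Matrix.mulVec_diagonal]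
  exact Finset.sum_congr rfl fun i _ => by ring

/-- The projected Bellman equation `Φθ = Π(R + γPΦθ)`, with
`Π = Φ(ΦᵀDΦ)⁻¹ΦᵀD`, has the unique solution `θ* = −(ΦᵀD(γP−I)Φ)⁻¹ΦᵀDR`. -/
theorem stmt2 (n q : ℕ) (P : Matrix (Fin n) (Fin n) ℝ) (d : Fin n → ℝ) (γ : ℝ)
    (Φ : Matrix (Fin n) (Fin q) ℝ) (R : Fin n → ℝ)
    (hPnonneg : ∀ i j, 0 ≤ P i j) (hProw : ∀ i, ∑ j, P i j = 1)
    (hdpos : ∀ i, 0 < d i) (hstat : ∀ j, ∑ i, d i * P i j = d j)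
    (hγ0 : 0 < γ) (hγ1 : γ < 1)
    (hΦ : Function.Injective Φ.mulVec)
    (D : Matrix (Fin n) (Fin n) ℝ) (hD : D = Matrix.diagonal d)
    (Proj : Matrix (Fin n) (Fin n) ℝ) (hProj : Proj = Φ * (Φᵀ * D * Φ)⁻¹ * Φᵀ * D) :
    ∀ θ : Fin q → ℝ,
      Φ.mulVec θ = Proj.mulVec (R + γ • P.mulVec (Φ.mulVec θ)) ↔
        θ = -((Φᵀ * D * (γ • P - 1) * Φ)⁻¹.mulVec ((Φᵀ * D).mulVec R)) := by
  subst hD hProj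
  set Dm := Matrix.diagonal d with hDm
  -- y ≠ 0 for x ≠ 0
  have hy0 : ∀ x : Fin q → ℝ, x ≠ 0 → Φ.mulVec x ≠ 0 := by
    intro x hx h
    exact hx (hΦ (by simpa using h))
  -- positivity of T = ∑ d i * y i ^ 2
  have hTpos : ∀ y : Fin n → ℝ, y ≠ 0 → 0 < ∑ i, d i * y i ^ 2 := by
    intro y hy
    obtain ⟨i, hi⟩ := Function.ne_iff.mp hy
    refine Finset.sum_pos' (fun j _ => mul_nonneg (hdpos j).le (sq_nonneg _))
      ⟨i, Finset.mem_univ i, ?_⟩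
    have h2 : (0:ℝ) < y i ^ 2 := lt_of_le_of_ne (sq_nonneg _) (Ne.symm (pow_ne_zero 2 hi))
    exact mul_pos (hdpos i) h2
  -- A = Φᵀ D Φ is invertible
  have hA : IsUnit (Φᵀ * Dm * Φ) := by
    rw [← Matrix.mulVec_injective_iff_isUnit]
    intro a b hab
    have h0 : (Φᵀ * Dm * Φ).mulVec (a - b) = 0 := by
      rw [Matrix.mulVec_sub, hab, sub_self]
    by_contra hne
    have hab0 : a - b ≠ 0 := sub_ne_zero.mpr fun h => hne h
    have hq : (a - b) ⬝ᵥ (Φᵀ * Dm * Φ).mulVec (a - b) = 0 := by rw [h0, dotProduct_zero]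
    have := quad_form_eq d Φ 1 (a - b)
    rw [Matrix.mul_one] at this  -- careful: ΦᵀDΦ vs ΦᵀD1Φ
    rw [this] at hq
    simp only [Matrix.one_mulVec] at hq
    have := hTpos (Φ.mulVec (a - b)) (hy0 _ hab0)
    have heq : ∑ i, d i * (Φ.mulVec (a-b)) i ^ 2 = 0 := by
      rw [← hq]; exact Finset.sum_congr rfl fun i _ => by ring
    linarith [heq ▸ this]
  -- M = Φᵀ D (γP - 1) Φ is invertible
  have hM : IsUnit (Φᵀ * Dm * (γ • P - 1) * Φ) := by
    rw [← Matrix.mulVec_injective_iff_isUnit]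
    intro a b hab
    have h0 : (Φᵀ * Dm * (γ • P - 1) * Φ).mulVec (a - b) = 0 := by
      rw [Matrix.mulVec_sub, hab, sub_self]
    by_contra hne
    have hab0 : a - b ≠ 0 := sub_ne_zero.mpr fun h => hne h
    set y := Φ.mulVec (a - b) with hy
    have hyne : y ≠ 0 := hy0 _ hab0
    have hq : (a - b) ⬝ᵥ (Φᵀ * Dm * (γ • P - 1) * Φ).mulVec (a - b) = 0 := by
      rw [h0, dotProduct_zero]
    rw [quad_form_eq d Φ (γ • P - 1) (a - b)] at hq
    -- rewrite quadratic form as γ S - T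
    set S := ∑ i, d i * y i * (P.mulVec y) i with hS
    set T := ∑ i, d i * y i ^ 2 with hT
    have hsplit : ∑ i, d i * y i * ((γ • P - 1).mulVec y) i = γ * S - T := by
      rw [hS, hT, Finset.mul_sum, ← Finset.sum_sub_distrib]
      refine Finset.sum_congr rfl fun i _ => ?_
      rw [Matrix.sub_mulVec, Matrix.smul_mulVec, Matrix.one_mulVec]
      simp only [Pi.sub_apply, Pi.smul_apply, smul_eq_mul]
      ring
    rw [hsplit] at hq
    have hTpos' := hTpos y hyne
    -- T' := ∑ d i * (Py) i ^2 ≤ T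
    have hT' : ∑ i, d i * (P.mulVec y) i ^ 2 ≤ T := by
      have step1 : ∀ i, (P.mulVec y) i ^ 2 ≤ ∑ j, P i j * y j ^ 2 := by
        intro i
        have := Finset.sum_mul_sq_le_sq_mul_sq Finset.univ
          (fun j => Real.sqrt (P i j)) (fun j => Real.sqrt (P i j) * y j)
        have e1 : ∀ j, Real.sqrt (P i j) * (Real.sqrt (P i j) * y j) = P i j * y j := by
          intro j; rw [← mul_assoc, Real.mul_self_sqrt (hPnonneg i j)]
        have e2 : ∀ j, Real.sqrt (P i j) ^ 2 = P i j := fun j => Real.sq_sqrt (hPnonneg i j)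
        have e3 : ∀ j, (Real.sqrt (P i j) * y j) ^ 2 = P i j * y j ^ 2 := by
          intro j; rw [mul_pow, e2]
        simp only [e1, e2, e3, hProw i, one_mul] at this
        simpa [Matrix.mulVec, dotProduct] using this
      calc ∑ i, d i * (P.mulVec y) i ^ 2
          ≤ ∑ i, d i * ∑ j, P i j * y j ^ 2 := by
            refine Finset.sum_le_sum fun i _ => ?_
            exact mul_le_mul_of_nonneg_left (step1 i) (hdpos i).le
        _ = ∑ j, (∑ i, d i * P i j) * y j ^ 2 := by
            simp_rw [Finset.mul_sum, Finset.sum_mul]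
            rw [Finset.sum_comm]
            exact Finset.sum_congr rfl fun j _ =>
              Finset.sum_congr rfl fun i _ => by ring
        _ = T := by rw [hT]; exact Finset.sum_congr rfl fun j _ => by rw [hstat j]
    have hST : S ≤ T := by
      have h2 : 2 * S ≤ T + ∑ i, d i * (P.mulVec y) i ^ 2 := by
        rw [hS, hT, Finset.mul_sum, ← Finset.sum_add_distrib]
        refine Finset.sum_le_sum fun i _ => ?_
        have := two_mul_le_add_sq (y i) ((P.mulVec y) i)
        nlinarith [(hdpos i).le]
      linarith
    -- conclude γ S - T < 0, contradiction
    have : γ * S - T < 0 := by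
      rcases le_or_gt S 0 with h | h
      · nlinarith
      · nlinarith
    linarith [hq ▸ this]
  -- now the equivalence
  intro θ
  set A := Φᵀ * Dm * Φ with hAdef
  set M := Φᵀ * Dm * (γ • P - 1) * Φ with hMdef
  have hMalg : M = γ • (Φᵀ * Dm * P * Φ) - A := by
    rw [hMdef, hAdef, Matrix.mul_sub, Matrix.sub_mul, Matrix.mul_one,
      Matrix.mul_smul, Matrix.smul_mul]
  set r := (Φᵀ * Dm).mulVec R with hr
  have hAd := (Matrix.isUnit_iff_isUnit_det _).mp hA
  have hMd := (Matrix.isUnit_iff_isUnit_det _).mp hM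
  have hProjv : ∀ v, (Φ * A⁻¹ * Φᵀ * Dm).mulVec v
      = Φ.mulVec (A⁻¹.mulVec ((Φᵀ * Dm).mulVec v)) := by
    intro v
    rw [Matrix.mulVec_mulVec, Matrix.mulVec_mulVec, Matrix.mul_assoc]
  have hcomp : ∀ w : Fin q → ℝ, (Φᵀ * Dm).mulVec (P.mulVec (Φ.mulVec w))
      = (Φᵀ * Dm * P * Φ).mulVec w := by
    intro w
    rw [Matrix.mulVec_mulVec, Matrix.mulVec_mulVec]
  constructor
  · intro h
    rw [hProjv] at h
    have h2 : θ = A⁻¹.mulVec ((Φᵀ * Dm).mulVec (R + γ • P.mulVec (Φ.mulVec θ))) := hΦ h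
    have h3 : A.mulVec θ = (Φᵀ * Dm).mulVec (R + γ • P.mulVec (Φ.mulVec θ)) := by
      conv_lhs => rw [h2]
      rw [Matrix.mulVec_mulVec, Matrix.mul_nonsing_inv _ hAd, Matrix.one_mulVec]
    have h4 : A.mulVec θ = r + γ • (Φᵀ * Dm * P * Φ).mulVec θ := by
      rw [h3, Matrix.mulVec_add, Matrix.mulVec_smul, hcomp, hr]
    have h5 : M.mulVec θ = -r := by
      rw [hMalg, Matrix.sub_mulVec, Matrix.smul_mulVec, h4]
      abel
    have h6 : θ = M⁻¹.mulVec (-r) := by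
      rw [← h5, Matrix.mulVec_mulVec, Matrix.nonsing_inv_mul _ hMd, Matrix.one_mulVec]
    rw [h6, Matrix.mulVec_neg]
  · intro h
    have h5 : M.mulVec θ = -r := by
      rw [h, Matrix.mulVec_neg, Matrix.mulVec_mulVec, Matrix.mul_nonsing_inv _ hMd,
        Matrix.one_mulVec]
    have h5' : γ • (Φᵀ * Dm * P * Φ).mulVec θ - A.mulVec θ = -r := by
      rw [← h5, hMalg, Matrix.sub_mulVec, Matrix.smul_mulVec]
    have h4 : A.mulVec θ = r + γ • (Φᵀ * Dm * P * Φ).mulVec θ := by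
      have h7 := congrArg (fun v => A.mulVec θ + r + v) h5'
      simpa using h7.symm.trans (by abel)
    have h3 : A.mulVec θ = (Φᵀ * Dm).mulVec (R + γ • P.mulVec (Φ.mulVec θ)) := by
      rw [Matrix.mulVec_add, Matrix.mulVec_smul, hcomp, ← hr, h4]
    have h2 : θ = A⁻¹.mulVec ((Φᵀ * Dm).mulVec (R + γ • P.mulVec (Φ.mulVec θ))) := by
      rw [← h3, Matrix.mulVec_mulVec, Matrix.nonsing_inv_mul _ hAd, Matrix.one_mulVec]
    rw [hProjv, ← h2]
end

section
/- Every equilibrium point of the linear ODE dθ/dt = ΦᵀD(−I+γP)Φ θ + ΦᵀD R is equal to θ* = −(ΦᵀD(γP−I)Φ)⁻¹ΦᵀDR, and θ* is globally asymptotically stable: every solution θ_t converges to θ* as t → ∞. -/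
/-!
Write `y = Φ θ` and `⟨u, v⟩_D = ∑ dᵢ uᵢ vᵢ`. By Jensen and stationarity of `d`, `P` is a
contraction for `‖·‖_D`, so by AM-GM `⟨y, P y⟩_D ≤ ‖y‖²_D` and hence
`θᵀ M θ = γ ⟨y, P y⟩_D - ‖y‖²_D < 0` for `θ ≠ 0`, as `Φ` is injective. Thus `M` is invertible,
so the equilibrium is unique, and by compactness of the unit sphere `θᵀ M θ ≤ -c |θ|²` for some
`c > 0`. Then `|θ_t - θ*|²` decays like `exp (-2ct)` by Grönwall.
-/

open Matrix Filter Topology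

section Stochastic

variable {ι : Type*} [Fintype ι] {P : Matrix ι ι ℝ} {d : ι → ℝ}

theorem mulVec_apply_sq_le (hP : ∀ i j, 0 ≤ P i j) (hrow : ∀ i, ∑ j, P i j = 1)
    (y : ι → ℝ) (i : ι) : (P *ᵥ y) i ^ 2 ≤ ∑ j, P i j * y j ^ 2 := by
  simpa [mulVec, dotProduct] using
    (even_two.convexOn_pow (𝕜 := ℝ)).map_sum_le (t := Finset.univ) (w := P i) (p := y)
      (fun j _ => hP i j) (hrow i) (fun j _ => Set.mem_univ _)

theorem sum_mul_mulVec_apply_sq_le (hP : ∀ i j, 0 ≤ P i j) (hrow : ∀ i, ∑ j, P i j = 1)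
    (hd : ∀ i, 0 ≤ d i) (hstat : ∀ j, ∑ i, d i * P i j = d j) (y : ι → ℝ) :
    ∑ i, d i * (P *ᵥ y) i ^ 2 ≤ ∑ i, d i * y i ^ 2 :=
  calc ∑ i, d i * (P *ᵥ y) i ^ 2 ≤ ∑ i, d i * ∑ j, P i j * y j ^ 2 :=
        Finset.sum_le_sum fun i _ => mul_le_mul_of_nonneg_left (mulVec_apply_sq_le hP hrow y i) (hd i)
    _ = ∑ j, (∑ i, d i * P i j) * y j ^ 2 := by
        simp only [Finset.mul_sum, Finset.sum_mul, mul_assoc]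
        exact Finset.sum_comm
    _ = ∑ i, d i * y i ^ 2 := by simp only [hstat]

theorem sum_mul_mul_mulVec_apply_le (hP : ∀ i j, 0 ≤ P i j) (hrow : ∀ i, ∑ j, P i j = 1)
    (hd : ∀ i, 0 ≤ d i) (hstat : ∀ j, ∑ i, d i * P i j = d j) (y : ι → ℝ) :
    ∑ i, d i * y i * (P *ᵥ y) i ≤ ∑ i, d i * y i ^ 2 := by
  have hamgm : ∀ i, 2 * (d i * y i * (P *ᵥ y) i) ≤ d i * y i ^ 2 + d i * (P *ᵥ y) i ^ 2 := by
    intro i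
    nlinarith [mul_le_mul_of_nonneg_left (two_mul_le_add_sq (y i) ((P *ᵥ y) i)) (hd i)]
  have := Finset.sum_le_sum fun i (_ : i ∈ Finset.univ) => hamgm i
  rw [← Finset.mul_sum, Finset.sum_add_distrib] at this
  linarith [sum_mul_mulVec_apply_sq_le hP hrow hd hstat y]

theorem dotProduct_diagonal_mul_mulVec_eq [DecidableEq ι] (γ : ℝ) (y : ι → ℝ) :
    y ⬝ᵥ (diagonal d * (γ • P - 1)) *ᵥ y
      = γ * ∑ i, d i * y i * (P *ᵥ y) i - ∑ i, d i * y i ^ 2 := by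
  simp only [← mulVec_mulVec, sub_mulVec, smul_mulVec, one_mulVec, dotProduct, mulVec_diagonal,
    Finset.mul_sum, ← Finset.sum_sub_distrib, Pi.sub_apply, Pi.smul_apply, smul_eq_mul]
  exact Finset.sum_congr rfl fun i _ => by ring

theorem dotProduct_diagonal_mul_mulVec_neg [DecidableEq ι] (hP : ∀ i j, 0 ≤ P i j)
    (hrow : ∀ i, ∑ j, P i j = 1) (hd : ∀ i, 0 < d i) (hstat : ∀ j, ∑ i, d i * P i j = d j)
    {γ : ℝ} (hγ0 : 0 ≤ γ) (hγ1 : γ < 1) {y : ι → ℝ} (hy : y ≠ 0) :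
    y ⬝ᵥ (diagonal d * (γ • P - 1)) *ᵥ y < 0 := by
  obtain ⟨i, hi⟩ := Function.ne_iff.mp hy
  have hpos : 0 < ∑ i, d i * y i ^ 2 :=
    Finset.sum_pos' (fun j _ => by have := hd j; positivity)
      ⟨i, Finset.mem_univ i, mul_pos (hd i) (sq_pos_of_ne_zero hi)⟩
  have hcross := sum_mul_mul_mulVec_apply_le hP hrow (fun i => (hd i).le) hstat y
  rw [dotProduct_diagonal_mul_mulVec_eq]
  nlinarith [mul_le_mul_of_nonneg_left hcross hγ0]

end Stochastic

section NegativeDefinite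

variable {ι : Type*} [Fintype ι] {A : Matrix ι ι ℝ}

theorem dotProduct_transpose_mul_mul_mulVec {κ : Type*} [Fintype κ] (Φ : Matrix κ ι ℝ)
    (B : Matrix κ κ ℝ) (x : ι → ℝ) : x ⬝ᵥ (Φᵀ * B * Φ) *ᵥ x = (Φ *ᵥ x) ⬝ᵥ B *ᵥ (Φ *ᵥ x) := by
  rw [← mulVec_mulVec, ← mulVec_mulVec, dotProduct_mulVec, vecMul_transpose]

theorem mulVec_injective_of_dotProduct_mulVec_neg (hA : ∀ x, x ≠ 0 → x ⬝ᵥ A *ᵥ x < 0) :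
    Function.Injective A.mulVec := by
  intro u v huv
  by_contra h
  have := hA (u - v) (sub_ne_zero.mpr h)
  rw [mulVec_sub, huv, sub_self, dotProduct_zero] at this
  exact lt_irrefl _ this

theorem norm_le_sqrt_dotProduct_self (x : ι → ℝ) : ‖x‖ ≤ √(x ⬝ᵥ x) :=
  (pi_norm_le_iff_of_nonneg (Real.sqrt_nonneg _)).mpr fun i =>
    Real.abs_le_sqrt <| by
      simpa [sq, dotProduct] using Finset.single_le_sum (f := fun j => x j * x j)
        (fun j _ => mul_self_nonneg (x j)) (Finset.mem_univ i)

theorem exists_pos_dotProduct_mulVec_le_neg_mul (hA : ∀ x, x ≠ 0 → x ⬝ᵥ A *ᵥ x < 0) :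
    ∃ c, 0 < c ∧ ∀ x, x ⬝ᵥ A *ᵥ x ≤ -c * (x ⬝ᵥ x) := by
  have hself : ∀ x : ι → ℝ, x ≠ 0 → 0 < x ⬝ᵥ x := fun x hx => by
    simpa using dotProduct_star_self_pos_iff.mpr hx
  -- the Rayleigh quotient is invariant under scaling, so its bound on the unit sphere is global
  set f : (ι → ℝ) → ℝ := fun x => -(x ⬝ᵥ A *ᵥ x) / (x ⬝ᵥ x) with hf
  have hsphere : ∀ x ∈ Metric.sphere (0 : ι → ℝ) 1, x ≠ 0 := fun x hx h => by simp [h] at hx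
  have hcont : ContinuousOn f (Metric.sphere 0 1) :=
    ContinuousOn.div (by fun_prop) (by fun_prop) fun x hx => (hself x (hsphere x hx)).ne'
  obtain ⟨c, hc, hcf⟩ := (isCompact_sphere (0 : ι → ℝ) 1).exists_forall_le' hcont
    (a := 0) fun x hx => div_pos (neg_pos.mpr (hA x (hsphere x hx))) (hself x (hsphere x hx))
  refine ⟨c, hc, fun x => ?_⟩
  rcases eq_or_ne x 0 with rfl | hx
  · simp
  have hscale : f (‖x‖⁻¹ • x) = f x := by
    have : ‖x‖ ≠ 0 := norm_ne_zero_iff.mpr hx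
    simp only [hf, mulVec_smul, smul_dotProduct, dotProduct_smul, smul_eq_mul]
    field_simp
  have := hcf (‖x‖⁻¹ • x) (by simp [norm_smul, hx])
  rw [hscale, hf, le_div_iff₀ (hself x hx)] at this
  linarith

theorem HasDerivAt.dotProduct_self {y : ℝ → ι → ℝ} {y' : ι → ℝ} {t : ℝ}
    (hy : HasDerivAt y y' t) : HasDerivAt (fun s => y s ⬝ᵥ y s) (2 * (y t ⬝ᵥ y')) t := by
  have hcoord i : HasDerivAt (fun s => y s i) (y' i) t := hasDerivAt_pi.mp hy i
  refine (HasDerivAt.fun_sum fun i _ => (hcoord i).mul (hcoord i)).congr_deriv ?_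
  simp only [dotProduct, Finset.mul_sum]
  exact Finset.sum_congr rfl fun i _ => by ring

theorem le_mul_exp_of_hasDerivAt_le_mul {g g' : ℝ → ℝ} {K t : ℝ}
    (hg : ∀ s, HasDerivAt g (g' s) s) (hle : ∀ s, g' s ≤ K * g s) (ht : 0 ≤ t) :
    g t ≤ g 0 * Real.exp (K * t) := by
  have := le_gronwallBound_of_liminf_deriv_right_le (f := g) (f' := g') (ε := 0) (b := t)
    (fun s _ => (hg s).continuousAt.continuousWithinAt)
    (fun s _ r hr => by simpa [slope] using (hg s).hasDerivWithinAt.liminf_right_slope_le hr)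
    le_rfl (fun s _ => by simpa using hle s) t ⟨ht, le_rfl⟩
  rwa [sub_zero, gronwallBound_ε0] at this

theorem tendsto_zero_of_hasDerivAt_mulVec (hA : ∀ x, x ≠ 0 → x ⬝ᵥ A *ᵥ x < 0)
    {y : ℝ → ι → ℝ} (hy : ∀ t, HasDerivAt y (A *ᵥ y t) t) : Tendsto y atTop (𝓝 0) := by
  obtain ⟨c, hc, hcA⟩ := exists_pos_dotProduct_mulVec_le_neg_mul hA
  have hdecay : ∀ t, 0 ≤ t → y t ⬝ᵥ y t ≤ (y 0 ⬝ᵥ y 0) * Real.exp (-(2 * c) * t) :=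
    fun t => le_mul_exp_of_hasDerivAt_le_mul (fun s => (hy s).dotProduct_self)
      fun s => by linarith [hcA (y s)]
  have hbound : Tendsto (fun t => √((y 0 ⬝ᵥ y 0) * Real.exp (-(2 * c) * t))) atTop (𝓝 0) := by
    have := (Real.tendsto_exp_atBot.comp
      (tendsto_id.const_mul_atTop_of_neg (neg_lt_zero.mpr (by positivity : 0 < 2 * c))))
    simpa using ((this.const_mul (y 0 ⬝ᵥ y 0)).sqrt)
  refine tendsto_zero_iff_norm_tendsto_zero.mpr (squeeze_zero' (.of_forall fun t => norm_nonneg _)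
    ?_ hbound)
  filter_upwards [eventually_ge_atTop 0] with t ht
  exact (norm_le_sqrt_dotProduct_self (y t)).trans (Real.sqrt_le_sqrt (hdecay t ht))

theorem tendsto_of_hasDerivAt_mulVec_add (hA : ∀ x, x ≠ 0 → x ⬝ᵥ A *ᵥ x < 0) {b θ₀ : ι → ℝ}
    (hθ₀ : A *ᵥ θ₀ + b = 0) {θ : ℝ → ι → ℝ} (hθ : ∀ t, HasDerivAt θ (A *ᵥ θ t + b) t) :
    Tendsto θ atTop (𝓝 θ₀) := by
  have hy : ∀ t, HasDerivAt (fun s => θ s - θ₀) (A *ᵥ (θ t - θ₀)) t := fun t =>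
    ((hθ t).sub_const θ₀).congr_deriv <| by
      rw [mulVec_sub, eq_neg_of_add_eq_zero_left hθ₀, sub_neg_eq_add]
  simpa using (tendsto_zero_of_hasDerivAt_mulVec hA hy).add_const θ₀

end NegativeDefinite

/-- Every equilibrium of `dθ/dt = ΦᵀD(−I+γP)Φ θ + ΦᵀDR` equals
`θ* = −(ΦᵀD(γP−I)Φ)⁻¹ΦᵀDR`, and every solution converges to `θ*` as `t → ∞`. -/
theorem stmt3 (n q : ℕ) (P : Matrix (Fin n) (Fin n) ℝ) (d : Fin n → ℝ) (γ : ℝ)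
    (Φ : Matrix (Fin n) (Fin q) ℝ) (R : Fin n → ℝ)
    (hPnonneg : ∀ i j, 0 ≤ P i j) (hProw : ∀ i, ∑ j, P i j = 1)
    (hdpos : ∀ i, 0 < d i) (hstat : ∀ j, ∑ i, d i * P i j = d j)
    (hγ0 : 0 < γ) (hγ1 : γ < 1)
    (hΦ : Function.Injective Φ.mulVec)
    (D : Matrix (Fin n) (Fin n) ℝ) (hD : D = Matrix.diagonal d)
    (M : Matrix (Fin q) (Fin q) ℝ) (hM : M = Φᵀ * D * (γ • P - 1) * Φ)
    (θstar : Fin q → ℝ)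
    (hθstar : θstar = -((Φᵀ * D * (γ • P - 1) * Φ)⁻¹.mulVec ((Φᵀ * D).mulVec R))) :
    (∀ θ : Fin q → ℝ, M.mulVec θ + (Φᵀ * D).mulVec R = 0 → θ = θstar)
    ∧ (∀ θ : ℝ → (Fin q → ℝ),
        (∀ t : ℝ, HasDerivAt θ (M.mulVec (θ t) + (Φᵀ * D).mulVec R) t) →
        Tendsto θ atTop (nhds θstar)) := by
  subst hD hM
  set A := Φᵀ * diagonal d * (γ • P - 1) * Φ with hA
  set b := (Φᵀ * diagonal d) *ᵥ R
  have hneg : ∀ x, x ≠ 0 → x ⬝ᵥ A *ᵥ x < 0 := fun x hx => by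
    rw [hA, Matrix.mul_assoc Φᵀ, dotProduct_transpose_mul_mul_mulVec]
    exact dotProduct_diagonal_mul_mulVec_neg hPnonneg hProw hdpos hstat hγ0.le hγ1
      fun h => hx (hΦ (h.trans (mulVec_zero Φ).symm))
  have hinj := mulVec_injective_of_dotProduct_mulVec_neg hneg
  have hdet : IsUnit A.det := (isUnit_iff_isUnit_det A).mp (mulVec_injective_iff_isUnit.mp hinj)
  have hfix : A *ᵥ θstar + b = 0 := by
    rw [hθstar, mulVec_neg, mulVec_mulVec, mul_nonsing_inv A hdet, one_mulVec, neg_add_cancel]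
  refine ⟨fun θ hθ => hinj ?_, fun θ hθ => tendsto_of_hasDerivAt_mulVec_add hneg hfix hθ⟩
  rw [eq_neg_of_add_eq_zero_left hθ, eq_neg_of_add_eq_zero_left hfix]
end

section
/- Suppose (θ̄_∞, w̄_∞) satisfies Φ̄ᵀD̄(−I+γP̄)Φ̄ θ̄_∞ + Φ̄ᵀD̄R̄ − L̄θ̄_∞ − L̄w̄_∞ = 0 and L̄θ̄_∞ = 0, where L̄ = L ⊗ I_q for a connected graph Laplacian L. Then θ̄_∞ = 𝟙_N ⊗ θ_c where θ_c = −(ΦᵀD(−I+γP)Φ)⁻¹ ΦᵀD((1/N)∑_{i=1}^N R_i). -/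
open Matrix
open scoped Kronecker

private lemma stmt7_quad_neg (n q : ℕ)
    (P : Matrix (Fin n) (Fin n) ℝ) (d : Fin n → ℝ) (γ : ℝ)
    (Φ : Matrix (Fin n) (Fin q) ℝ)
    (hPnonneg : ∀ i j, 0 ≤ P i j) (hProw : ∀ i, ∑ j, P i j = 1)
    (hdpos : ∀ i, 0 < d i) (hstat : ∀ j, ∑ i, d i * P i j = d j)
    (hγ0 : 0 < γ) (hγ1 : γ < 1)
    (hΦ : Function.Injective Φ.mulVec)
    (x : Fin q → ℝ) (hx : x ≠ 0) :
    x ⬝ᵥ (Φᵀ * Matrix.diagonal d * (γ • P - 1) * Φ).mulVec x < 0 := by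
  set v : Fin n → ℝ := Φ.mulVec x with hv
  have hv0 : v ≠ 0 := by
    intro h
    exact hx (hΦ (by rw [← hv, h]; simp [Matrix.mulVec_zero]))
  set Q : Fin n → ℝ := P.mulVec v with hQ
  set S : ℝ := ∑ i, d i * v i ^ 2 with hS
  set T : ℝ := ∑ i, d i * Q i ^ 2 with hT
  set B : ℝ := ∑ i, d i * (v i * Q i) with hB
  have hform : x ⬝ᵥ (Φᵀ * Matrix.diagonal d * (γ • P - 1) * Φ).mulVec x = γ * B - S := by
    have h1 : (Φᵀ * Matrix.diagonal d * (γ • P - 1) * Φ).mulVec x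
        = Φᵀ.mulVec ((Matrix.diagonal d).mulVec ((γ • P - 1).mulVec v)) := by
      rw [hv, Matrix.mulVec_mulVec, Matrix.mulVec_mulVec, Matrix.mulVec_mulVec]
    rw [h1, Matrix.dotProduct_mulVec, Matrix.vecMul_transpose, ← hv]
    simp only [Matrix.sub_mulVec, Matrix.smul_mulVec, Matrix.one_mulVec, ← hQ]
    simp only [dotProduct, Pi.sub_apply, Pi.smul_apply, smul_eq_mul,
      Matrix.mulVec_diagonal]
    rw [hS, hB, Finset.mul_sum, ← Finset.sum_sub_distrib]
    congr 1; funext i; ring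
  rw [hform]
  have hSpos : 0 < S := by
    obtain ⟨i, hi⟩ := Function.ne_iff.mp hv0
    refine Finset.sum_pos' (fun j _ => mul_nonneg (hdpos j).le (sq_nonneg _))
      ⟨i, Finset.mem_univ i, mul_pos (hdpos i)
        (lt_of_le_of_ne (sq_nonneg _) (Ne.symm (pow_ne_zero 2 hi)))⟩
  have hTS : T ≤ S := by
    have step1 : ∀ i, Q i ^ 2 ≤ ∑ j, P i j * v j ^ 2 := by
      intro i
      have := Finset.sum_sq_le_sum_mul_sum_of_sq_eq_mul (Finset.univ)
        (r := fun j => P i j * v j) (f := fun j => P i j) (g := fun j => P i j * v j ^ 2)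
        (fun j _ => hPnonneg i j) (fun j _ => mul_nonneg (hPnonneg i j) (sq_nonneg _))
        (fun j _ => by ring)
      rw [hProw i, one_mul] at this
      exact this
    calc T ≤ ∑ i, d i * ∑ j, P i j * v j ^ 2 :=
          Finset.sum_le_sum fun i _ => mul_le_mul_of_nonneg_left (step1 i) (hdpos i).le
      _ = ∑ i, ∑ j, d i * P i j * v j ^ 2 := by
          simp_rw [Finset.mul_sum]; congr 1; funext i; congr 1; funext j; ring
      _ = ∑ j, ∑ i, d i * P i j * v j ^ 2 := Finset.sum_comm
      _ = ∑ j, (∑ i, d i * P i j) * v j ^ 2 := by simp_rw [Finset.sum_mul]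
      _ = S := by rw [hS]; congr 1; funext j; rw [hstat j]
  have hBS : B ≤ S := by
    have h2 : B * 2 ≤ S + T := by
      calc B * 2 = ∑ i, d i * (2 * (v i * Q i)) := by
            rw [hB, Finset.sum_mul]; congr 1; funext i; ring
        _ ≤ ∑ i, d i * (v i ^ 2 + Q i ^ 2) :=
            Finset.sum_le_sum fun i _ => mul_le_mul_of_nonneg_left
              (by nlinarith [sq_nonneg (v i - Q i)]) (hdpos i).le
        _ = S + T := by
            rw [hS, hT, ← Finset.sum_add_distrib]; congr 1; funext i; ring
    linarith
  rcases le_or_gt B 0 with h | h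
  · nlinarith
  · nlinarith

private lemma stmt7_one_kron_sub (N n : ℕ) (X Y : Matrix (Fin n) (Fin n) ℝ) :
    (1 : Matrix (Fin N) (Fin N) ℝ) ⊗ₖ (X - Y)
      = (1 : Matrix (Fin N) (Fin N) ℝ) ⊗ₖ X - (1 : Matrix (Fin N) (Fin N) ℝ) ⊗ₖ Y := by
  ext ⟨i, j⟩ ⟨k, l⟩
  by_cases h : i = k <;>
    simp [Matrix.kroneckerMap_apply, Matrix.one_apply, h, mul_sub]

private lemma stmt7_one_kron_transpose (N n q : ℕ) (Φ : Matrix (Fin n) (Fin q) ℝ) :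
    ((1 : Matrix (Fin N) (Fin N) ℝ) ⊗ₖ Φ)ᵀ = (1 : Matrix (Fin N) (Fin N) ℝ) ⊗ₖ Φᵀ := by
  ext ⟨i, j⟩ ⟨k, l⟩
  by_cases h : i = k <;>
    simp [Matrix.kroneckerMap_apply, Matrix.one_apply, h, eq_comm]

private lemma stmt7_big_kron (N n q : ℕ) (Φ : Matrix (Fin n) (Fin q) ℝ)
    (D P : Matrix (Fin n) (Fin n) ℝ) (γ : ℝ) :
    ((1 : Matrix (Fin N) (Fin N) ℝ) ⊗ₖ Φ)ᵀ * ((1 : Matrix (Fin N) (Fin N) ℝ) ⊗ₖ D)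
        * (γ • ((1 : Matrix (Fin N) (Fin N) ℝ) ⊗ₖ P) - 1) * ((1 : Matrix (Fin N) (Fin N) ℝ) ⊗ₖ Φ)
      = (1 : Matrix (Fin N) (Fin N) ℝ) ⊗ₖ (Φᵀ * D * (γ • P - 1) * Φ) := by
  rw [stmt7_one_kron_transpose, ← Matrix.kronecker_smul, ← Matrix.one_kronecker_one (α := ℝ),
    ← stmt7_one_kron_sub, ← Matrix.mul_kronecker_mul, ← Matrix.mul_kronecker_mul,
    ← Matrix.mul_kronecker_mul, Matrix.one_mul, Matrix.one_mul, Matrix.one_mul]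

/-- If `(θ̄_∞, w̄_∞)` satisfies `Φ̄ᵀD̄(−I+γP̄)Φ̄θ̄_∞ + Φ̄ᵀD̄R̄ − L̄θ̄_∞ − L̄w̄_∞ = 0`
and `L̄θ̄_∞ = 0` with `L̄ = L ⊗ I_q` for a connected graph Laplacian `L`, then
`θ̄_∞ = 𝟙_N ⊗ θ_c` with `θ_c = −(ΦᵀD(−I+γP)Φ)⁻¹ΦᵀD((1/N)∑_i R_i)`. -/
theorem stmt7 (n q N : ℕ) (hN : 0 < N)
    (P : Matrix (Fin n) (Fin n) ℝ) (d : Fin n → ℝ) (γ : ℝ)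
    (Φ : Matrix (Fin n) (Fin q) ℝ) (R : Fin N → (Fin n → ℝ))
    (hPnonneg : ∀ i j, 0 ≤ P i j) (hProw : ∀ i, ∑ j, P i j = 1)
    (hdpos : ∀ i, 0 < d i) (hstat : ∀ j, ∑ i, d i * P i j = d j)
    (hγ0 : 0 < γ) (hγ1 : γ < 1)
    (hΦ : Function.Injective Φ.mulVec)
    (D : Matrix (Fin n) (Fin n) ℝ) (hD : D = Matrix.diagonal d)
    (L : Matrix (Fin N) (Fin N) ℝ)
    (hsym : Lᵀ = L)
    (hpsd : ∀ y : Fin N → ℝ, 0 ≤ y ⬝ᵥ L.mulVec y)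
    (hnull : ∀ y : Fin N → ℝ, L.mulVec y = 0 ↔ ∃ c : ℝ, y = fun _ => c)
    (Φbar : Matrix (Fin N × Fin n) (Fin N × Fin q) ℝ)
    (hΦbar : Φbar = (1 : Matrix (Fin N) (Fin N) ℝ) ⊗ₖ Φ)
    (Dbar : Matrix (Fin N × Fin n) (Fin N × Fin n) ℝ)
    (hDbar : Dbar = (1 : Matrix (Fin N) (Fin N) ℝ) ⊗ₖ D)
    (Pbar : Matrix (Fin N × Fin n) (Fin N × Fin n) ℝ)
    (hPbar : Pbar = (1 : Matrix (Fin N) (Fin N) ℝ) ⊗ₖ P)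
    (Lbar : Matrix (Fin N × Fin q) (Fin N × Fin q) ℝ)
    (hLbar : Lbar = L ⊗ₖ (1 : Matrix (Fin q) (Fin q) ℝ))
    (Rbar : Fin N × Fin n → ℝ) (hRbar : Rbar = fun p => R p.1 p.2)
    (θinf winf : Fin N × Fin q → ℝ)
    (heq1 : (Φbarᵀ * Dbar * (γ • Pbar - 1) * Φbar).mulVec θinf
        + Φbarᵀ.mulVec (Dbar.mulVec Rbar) - Lbar.mulVec θinf - Lbar.mulVec winf = 0)
    (heq2 : Lbar.mulVec θinf = 0) :
    θinf = fun p =>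
      (-((Φᵀ * D * (γ • P - 1) * Φ)⁻¹.mulVec
        ((Φᵀ * D).mulVec ((N : ℝ)⁻¹ • ∑ i, R i)))) p.2 := by
  subst hΦbar hDbar hPbar hLbar hRbar
  set A : Matrix (Fin q) (Fin q) ℝ := Φᵀ * D * (γ • P - 1) * Φ with hA
  -- invertibility of A
  have hdet : A.det ≠ 0 := by
    intro h
    obtain ⟨x, hx0, hx⟩ := Matrix.exists_mulVec_eq_zero_iff.mpr h
    have hneg := stmt7_quad_neg n q P d γ Φ hPnonneg hProw hdpos hstat hγ0 hγ1 hΦ x hx0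
    rw [← hD, ← hA, hx, dotProduct_zero] at hneg
    exact lt_irrefl 0 hneg
  have hAinv : A⁻¹ * A = 1 := Matrix.nonsing_inv_mul A (isUnit_iff_ne_zero.mpr hdet)
  -- consensus: θinf (k, j) = c j
  set i0 : Fin N := ⟨0, hN⟩ with hi0
  set c : Fin q → ℝ := fun j => θinf (i0, j) with hcdef
  have hc : ∀ k j, θinf (k, j) = c j := by
    intro k j
    have hLcol : L.mulVec (fun k => θinf (k, j)) = 0 := by
      funext i
      have h := congrFun heq2 (i, j)
      simp only [Pi.zero_apply] at h
      rw [show ((L ⊗ₖ (1 : Matrix (Fin q) (Fin q) ℝ)).mulVec θinf) (i, j)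
          = ∑ k, L i k * θinf (k, j) by
        simp [Matrix.mulVec, dotProduct, Fintype.sum_prod_type, Matrix.one_apply,
          mul_ite, mul_zero, mul_one, Finset.sum_ite_eq, Finset.sum_ite_eq']] at h
      simpa [Matrix.mulVec, dotProduct] using h
    obtain ⟨cj, hcj⟩ := (hnull _).mp hLcol
    rw [show θinf (k, j) = cj from congrFun hcj k, hcdef]
    exact (congrFun hcj i0).symm
  -- column sums of L vanish
  have hLone : L.mulVec (fun _ => (1 : ℝ)) = 0 := (hnull _).mpr ⟨1, rfl⟩
  have hcol : ∀ k, ∑ i, L i k = 0 := by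
    intro k
    have h := congrFun hLone k
    simp only [Matrix.mulVec, dotProduct, mul_one, Pi.zero_apply] at h
    rw [← h]
    congr 1; funext i
    exact (congrFun (congrFun hsym i) k).symm
  -- component equations from heq1
  have hterm : ∀ (i : Fin N) (j : Fin q),
      (A.mulVec c) j + ((Φᵀ * D).mulVec (R i)) j - ∑ k, L i k * winf (k, j) = 0 := by
    intro i j
    have h := congrFun heq1 (i, j)
    simp only [Pi.add_apply, Pi.sub_apply, Pi.zero_apply] at h
    rw [stmt7_big_kron, ← hA] at h
    rw [show (((1 : Matrix (Fin N) (Fin N) ℝ) ⊗ₖ A).mulVec θinf) (i, j)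
        = ∑ l, A j l * θinf (i, l) by
      simp [Matrix.mulVec, dotProduct, Fintype.sum_prod_type, Matrix.one_apply,
        ite_mul, zero_mul, one_mul, Finset.sum_ite_eq, Finset.sum_ite_eq']] at h
    rw [show (((1 : Matrix (Fin N) (Fin N) ℝ) ⊗ₖ Φ)ᵀ.mulVec
        (((1 : Matrix (Fin N) (Fin N) ℝ) ⊗ₖ D).mulVec (fun p => R p.1 p.2))) (i, j)
        = ((Φᵀ * D).mulVec (R i)) j by
      simp [Matrix.mulVec, dotProduct, Fintype.sum_prod_type, Matrix.one_apply,
        Matrix.mul_apply, ite_mul, zero_mul, one_mul, mul_ite, mul_zero, mul_one,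
        Finset.sum_ite_eq, Finset.sum_ite_eq', Finset.mul_sum, Finset.sum_mul]
      rw [Finset.sum_comm]
      congr 1; funext l; congr 1; funext k; ring] at h
    rw [congrFun heq2 (i, j)] at h
    rw [show ((L ⊗ₖ (1 : Matrix (Fin q) (Fin q) ℝ)).mulVec winf) (i, j)
        = ∑ k, L i k * winf (k, j) by
      simp [Matrix.mulVec, dotProduct, Fintype.sum_prod_type, Matrix.one_apply,
        mul_ite, mul_zero, mul_one, Finset.sum_ite_eq, Finset.sum_ite_eq']] at h
    rw [show ∑ l, A j l * θinf (i, l) = (A.mulVec c) j by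
      simp only [Matrix.mulVec, dotProduct]
      congr 1; funext l; rw [hc i l]] at h
    simpa using h
  -- sum over i
  have key : ∀ j : Fin q, (N : ℝ) * (A.mulVec c) j + ((Φᵀ * D).mulVec (∑ i, R i)) j = 0 := by
    intro j
    have hsum : ∑ i : Fin N,
        ((A.mulVec c) j + ((Φᵀ * D).mulVec (R i)) j - ∑ k, L i k * winf (k, j)) = 0 :=
      Finset.sum_eq_zero fun i _ => hterm i j
    rw [Finset.sum_sub_distrib, Finset.sum_add_distrib, Finset.sum_const,
      Finset.card_univ, Fintype.card_fin, nsmul_eq_mul] at hsum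
    have hw : ∑ i : Fin N, ∑ k, L i k * winf (k, j) = 0 := by
      rw [Finset.sum_comm]
      apply Finset.sum_eq_zero
      intro k _
      rw [← Finset.sum_mul, hcol k, zero_mul]
    have hR : ∑ i : Fin N, ((Φᵀ * D).mulVec (R i)) j = ((Φᵀ * D).mulVec (∑ i, R i)) j := by
      simp only [Matrix.mulVec, dotProduct, Finset.sum_apply, Finset.mul_sum]
      rw [Finset.sum_comm]
    rw [hw, hR] at hsum
    linarith
  -- solve for c
  have hNne : (N : ℝ) ≠ 0 := Nat.cast_ne_zero.mpr hN.ne'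
  have hAc : A.mulVec c = -((Φᵀ * D).mulVec ((N : ℝ)⁻¹ • ∑ i, R i)) := by
    funext j
    have h := key j
    rw [Matrix.mulVec_smul]
    simp only [Pi.neg_apply, Pi.smul_apply, smul_eq_mul]
    field_simp
    linarith
  have hcval : c = -(A⁻¹.mulVec ((Φᵀ * D).mulVec ((N : ℝ)⁻¹ • ∑ i, R i))) := by
    have : A⁻¹.mulVec (A.mulVec c) = c := by
      rw [Matrix.mulVec_mulVec, hAinv, Matrix.one_mulVec]
    rw [← this, hAc, Matrix.mulVec_neg]
  funext p
  obtain ⟨i, j⟩ := p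
  rw [hc i j, hcval]
end

section
/- With M = ΦᵀD(−I+γP)Φ and L̄ = L ⊗ I_q (L a graph Laplacian), the symmetric part of the stacked matrix (I_N ⊗ M) − L̄ is negative definite; concretely, (I_N⊗M) + (I_N⊗M)ᵀ − 2L̄ ⪯ 2(γ−1)D̄ − 2L̄ ≺ 0, where D̄ = I_N ⊗ D. -/
open Matrix
open scoped Kronecker

private lemma quad_one_kron {N q : ℕ} (B : Matrix (Fin q) (Fin q) ℝ) (x : Fin N × Fin q → ℝ) :
    x ⬝ᵥ (((1 : Matrix (Fin N) (Fin N) ℝ) ⊗ₖ B).mulVec x)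
      = ∑ k, (fun i => x (k,i)) ⬝ᵥ B.mulVec (fun i => x (k,i)) := by
  simp only [dotProduct, Matrix.mulVec, Fintype.sum_prod_type,
    Matrix.kroneckerMap_apply, Matrix.one_apply, ite_mul, one_mul, zero_mul,
    Finset.sum_ite_irrel, Finset.sum_const_zero,
    Finset.sum_ite_eq, Finset.mem_univ, if_true]

private lemma quad_kron_one {N q : ℕ} (A : Matrix (Fin N) (Fin N) ℝ) (x : Fin N × Fin q → ℝ) :
    x ⬝ᵥ ((A ⊗ₖ (1 : Matrix (Fin q) (Fin q) ℝ)).mulVec x)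
      = ∑ j, (fun k => x (k,j)) ⬝ᵥ A.mulVec (fun k => x (k,j)) := by
  simp only [dotProduct, Matrix.mulVec, Fintype.sum_prod_type,
    Matrix.kroneckerMap_apply, Matrix.one_apply, mul_ite, mul_one, mul_zero, ite_mul, zero_mul,
    Finset.sum_ite_eq, Finset.mem_univ, if_true]
  rw [Finset.sum_comm]

private lemma quad_transpose {m : Type*} [Fintype m] (A : Matrix m m ℝ) (x : m → ℝ) :
    x ⬝ᵥ Aᵀ.mulVec x = x ⬝ᵥ A.mulVec x := by
  simp only [dotProduct, Matrix.mulVec, Matrix.transpose_apply, Finset.mul_sum]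
  rw [Finset.sum_comm]
  exact Finset.sum_congr rfl fun i _ => Finset.sum_congr rfl fun j _ => by ring

private lemma quad_sandwich {n q : ℕ} (Φ : Matrix (Fin n) (Fin q) ℝ)
    (B : Matrix (Fin n) (Fin n) ℝ) (v : Fin q → ℝ) :
    v ⬝ᵥ (Φᵀ * B * Φ).mulVec v = (Φ.mulVec v) ⬝ᵥ B.mulVec (Φ.mulVec v) := by
  rw [Matrix.mul_assoc, ← Matrix.mulVec_mulVec, ← Matrix.mulVec_mulVec,
    Matrix.dotProduct_mulVec, Matrix.vecMul_transpose]

private lemma core_ineq (n : ℕ) (P : Matrix (Fin n) (Fin n) ℝ) (d : Fin n → ℝ) (γ : ℝ)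
    (hPnonneg : ∀ i j, 0 ≤ P i j) (hProw : ∀ i, ∑ j, P i j = 1)
    (hdpos : ∀ i, 0 < d i) (hstat : ∀ j, ∑ i, d i * P i j = d j)
    (hγ0 : 0 < γ) (y : Fin n → ℝ) :
    y ⬝ᵥ ((Matrix.diagonal d * (γ • P - 1)).mulVec y)
      ≤ (γ - 1) * (y ⬝ᵥ (Matrix.diagonal d).mulVec y) := by
  have hDy : y ⬝ᵥ (Matrix.diagonal d).mulVec y = ∑ i, d i * (y i)^2 := by
    simp only [dotProduct, Matrix.mulVec_diagonal]
    exact Finset.sum_congr rfl fun i _ => by ring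
  have hDPy : y ⬝ᵥ (Matrix.diagonal d * P).mulVec y = ∑ i, ∑ j, d i * P i j * y i * y j := by
    simp only [dotProduct, Matrix.mulVec, Matrix.diagonal_mul, Finset.mul_sum]
    exact Finset.sum_congr rfl fun i _ => Finset.sum_congr rfl fun j _ => by ring
  have key : ∑ i, ∑ j, d i * P i j * y i * y j ≤ ∑ i, d i * (y i)^2 := by
    have hS : 0 ≤ ∑ i, ∑ j, d i * P i j * (y i - y j)^2 :=
      Finset.sum_nonneg fun i _ => Finset.sum_nonneg fun j _ =>
        mul_nonneg (mul_nonneg (hdpos i).le (hPnonneg i j)) (sq_nonneg _)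
    have h1 : ∀ i, ∑ j, d i * P i j * (y i - y j)^2
        = d i * (y i)^2 + (∑ j, d i * P i j * (y j)^2) - 2 * ∑ j, d i * P i j * y i * y j := by
      intro i
      have e : ∑ j, d i * P i j * (y i - y j)^2
          = (∑ j, P i j) * (d i * (y i)^2) + (∑ j, d i * P i j * (y j)^2)
            - 2 * ∑ j, d i * P i j * y i * y j := by
        rw [Finset.sum_mul, Finset.mul_sum, ← Finset.sum_add_distrib, ← Finset.sum_sub_distrib]
        exact Finset.sum_congr rfl fun j _ => by ring
      rw [e, hProw i, one_mul]
    have h2 : ∑ i, ∑ j, d i * P i j * (y j)^2 = ∑ j, d j * (y j)^2 := by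
      rw [Finset.sum_comm]
      refine Finset.sum_congr rfl fun j _ => ?_
      have : ∑ i, d i * P i j * (y j)^2 = (∑ i, d i * P i j) * (y j)^2 := by
        rw [Finset.sum_mul]
      rw [this, hstat j]
    have expand : ∑ i, ∑ j, d i * P i j * (y i - y j)^2
        = 2 * (∑ i, d i * (y i)^2) - 2 * (∑ i, ∑ j, d i * P i j * y i * y j) := by
      rw [Finset.sum_congr rfl fun i _ => h1 i, Finset.sum_sub_distrib, Finset.sum_add_distrib,
        h2, ← Finset.mul_sum]
      ring
    linarith
  have hfac : (Matrix.diagonal d) * (γ • P - 1) = γ • (Matrix.diagonal d * P) - Matrix.diagonal d := by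
    rw [mul_sub, mul_one, Matrix.mul_smul]
  rw [hfac, Matrix.sub_mulVec, Matrix.smul_mulVec, dotProduct_sub, dotProduct_smul,
    hDPy, hDy, smul_eq_mul]
  nlinarith [mul_le_mul_of_nonneg_left key hγ0.le]

private lemma diag_pos (n : ℕ) (d : Fin n → ℝ) (hdpos : ∀ i, 0 < d i)
    (y : Fin n → ℝ) (hy : y ≠ 0) : 0 < y ⬝ᵥ (Matrix.diagonal d).mulVec y := by
  have hDy : y ⬝ᵥ (Matrix.diagonal d).mulVec y = ∑ i, d i * (y i)^2 := by
    simp only [dotProduct, Matrix.mulVec_diagonal]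
    exact Finset.sum_congr rfl fun i _ => by ring
  rw [hDy]
  obtain ⟨i, hi⟩ := Function.ne_iff.mp hy
  refine Finset.sum_pos' (fun j _ => mul_nonneg (hdpos j).le (sq_nonneg _)) ⟨i, Finset.mem_univ i, ?_⟩
  exact mul_pos (hdpos i) (sq_pos_of_ne_zero hi)

/-- With `M = ΦᵀD(−I+γP)Φ` and `L̄ = L ⊗ I_q`, the symmetric part of the
stacked matrix `(I_N ⊗ M) − L̄` is negative definite; concretely
`(I_N⊗M) + (I_N⊗M)ᵀ − 2L̄ ⪯ 2(γ−1)Φ̄ᵀD̄Φ̄ − 2L̄ ≺ 0`. -/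
theorem stmt8 (n q N : ℕ)
    (P : Matrix (Fin n) (Fin n) ℝ) (d : Fin n → ℝ) (γ : ℝ)
    (Φ : Matrix (Fin n) (Fin q) ℝ)
    (hPnonneg : ∀ i j, 0 ≤ P i j) (hProw : ∀ i, ∑ j, P i j = 1)
    (hdpos : ∀ i, 0 < d i) (hstat : ∀ j, ∑ i, d i * P i j = d j)
    (hγ0 : 0 < γ) (hγ1 : γ < 1)
    (hΦ : Function.Injective Φ.mulVec)
    (D : Matrix (Fin n) (Fin n) ℝ) (hD : D = Matrix.diagonal d)
    (L : Matrix (Fin N) (Fin N) ℝ)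
    (hsym : Lᵀ = L)
    (hpsd : ∀ y : Fin N → ℝ, 0 ≤ y ⬝ᵥ L.mulVec y)
    (M : Matrix (Fin q) (Fin q) ℝ) (hM : M = Φᵀ * D * (γ • P - 1) * Φ)
    (Φbar : Matrix (Fin N × Fin n) (Fin N × Fin q) ℝ)
    (hΦbar : Φbar = (1 : Matrix (Fin N) (Fin N) ℝ) ⊗ₖ Φ)
    (Dbar : Matrix (Fin N × Fin n) (Fin N × Fin n) ℝ)
    (hDbar : Dbar = (1 : Matrix (Fin N) (Fin N) ℝ) ⊗ₖ D)
    (Lbar : Matrix (Fin N × Fin q) (Fin N × Fin q) ℝ)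
    (hLbar : Lbar = L ⊗ₖ (1 : Matrix (Fin q) (Fin q) ℝ))
    (Mbar : Matrix (Fin N × Fin q) (Fin N × Fin q) ℝ)
    (hMbar : Mbar = (1 : Matrix (Fin N) (Fin N) ℝ) ⊗ₖ M) :
    (∀ x : Fin N × Fin q → ℝ,
        x ⬝ᵥ ((Mbar + Mbarᵀ - (2 : ℝ) • Lbar).mulVec x) ≤
        x ⬝ᵥ (((2 * (γ - 1)) • (Φbarᵀ * Dbar * Φbar) - (2 : ℝ) • Lbar).mulVec x))
    ∧ (∀ x : Fin N × Fin q → ℝ, x ≠ 0 →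
        x ⬝ᵥ (((2 * (γ - 1)) • (Φbarᵀ * Dbar * Φbar) - (2 : ℝ) • Lbar).mulVec x) < 0)
    ∧ (∀ x : Fin N × Fin q → ℝ, x ≠ 0 →
        x ⬝ᵥ ((Mbar + Mbarᵀ - (2 : ℝ) • Lbar).mulVec x) < 0) := by
  -- Φ̄ᵀ D̄ Φ̄ = 1 ⊗ (Φᵀ D Φ)
  have hSand : Φbarᵀ * Dbar * Φbar
      = (1 : Matrix (Fin N) (Fin N) ℝ) ⊗ₖ (Φᵀ * D * Φ) := by
    rw [hΦbar, hDbar]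
    rw [← Matrix.kroneckerMap_transpose, Matrix.transpose_one,
      ← Matrix.mul_kronecker_mul, ← Matrix.mul_kronecker_mul, Matrix.one_mul, Matrix.one_mul]
  -- quadratic form decompositions
  have hMq : ∀ x : Fin N × Fin q → ℝ,
      x ⬝ᵥ Mbar.mulVec x = ∑ k, (fun i => x (k,i)) ⬝ᵥ M.mulVec (fun i => x (k,i)) := by
    intro x; rw [hMbar, quad_one_kron]
  have hQq : ∀ x : Fin N × Fin q → ℝ,
      x ⬝ᵥ (Φbarᵀ * Dbar * Φbar).mulVec x
        = ∑ k, (fun i => x (k,i)) ⬝ᵥ (Φᵀ * D * Φ).mulVec (fun i => x (k,i)) := by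
    intro x; rw [hSand, quad_one_kron]
  have hLq : ∀ x : Fin N × Fin q → ℝ, 0 ≤ x ⬝ᵥ Lbar.mulVec x := by
    intro x
    rw [hLbar, quad_kron_one]
    exact Finset.sum_nonneg fun j _ => hpsd _
  -- key blockwise inequality : x ⬝ Mbar x ≤ (γ-1) * x ⬝ (Φ̄ᵀD̄Φ̄) x
  have hblock : ∀ x : Fin N × Fin q → ℝ,
      x ⬝ᵥ Mbar.mulVec x ≤ (γ - 1) * (x ⬝ᵥ (Φbarᵀ * Dbar * Φbar).mulVec x) := by
    intro x
    rw [hMq, hQq, Finset.mul_sum]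
    refine Finset.sum_le_sum fun k _ => ?_
    set v : Fin q → ℝ := fun i => x (k,i)
    have h1 : v ⬝ᵥ M.mulVec v
        = (Φ.mulVec v) ⬝ᵥ ((Matrix.diagonal d) * (γ • P - 1)).mulVec (Φ.mulVec v) := by
      rw [hM, hD, Matrix.mul_assoc Φᵀ (Matrix.diagonal d) (γ • P - 1), quad_sandwich]
    have h2 : v ⬝ᵥ (Φᵀ * D * Φ).mulVec v
        = (Φ.mulVec v) ⬝ᵥ (Matrix.diagonal d).mulVec (Φ.mulVec v) := by
      rw [hD, quad_sandwich]
    rw [h1, h2]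
    exact core_ineq n P d γ hPnonneg hProw hdpos hstat hγ0 (Φ.mulVec v)
  -- positivity of Φ̄ᵀD̄Φ̄ quadratic form
  have hQpos : ∀ x : Fin N × Fin q → ℝ, x ≠ 0 →
      0 < x ⬝ᵥ (Φbarᵀ * Dbar * Φbar).mulVec x := by
    intro x hx
    rw [hQq]
    obtain ⟨⟨k, i⟩, hki⟩ := Function.ne_iff.mp hx
    have hterm : ∀ l : Fin N, 0 ≤ (fun i => x (l,i)) ⬝ᵥ (Φᵀ * D * Φ).mulVec (fun i => x (l,i)) := by
      intro l
      rw [hD, quad_sandwich]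
      by_cases hz : Φ.mulVec (fun i => x (l,i)) = 0
      · rw [hz]; simp
      · exact (diag_pos n d hdpos _ hz).le
    refine Finset.sum_pos' (fun l _ => hterm l) ⟨k, Finset.mem_univ k, ?_⟩
    have hvk : (fun i => x (k,i)) ≠ 0 := by
      intro h
      exact hki (congrFun h i)
    have hz : Φ.mulVec (fun i => x (k,i)) ≠ 0 := by
      intro h
      apply hvk
      apply hΦ
      rw [h, Matrix.mulVec_zero]
    rw [hD, quad_sandwich]
    exact diag_pos n d hdpos _ hz
  -- expansion of the two quadratic forms
  have hexp1 : ∀ x : Fin N × Fin q → ℝ,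
      x ⬝ᵥ ((Mbar + Mbarᵀ - (2 : ℝ) • Lbar).mulVec x)
        = 2 * (x ⬝ᵥ Mbar.mulVec x) - 2 * (x ⬝ᵥ Lbar.mulVec x) := by
    intro x
    rw [Matrix.sub_mulVec, Matrix.add_mulVec, Matrix.smul_mulVec,
      dotProduct_sub, dotProduct_add, dotProduct_smul, quad_transpose, smul_eq_mul]
    ring
  have hexp2 : ∀ x : Fin N × Fin q → ℝ,
      x ⬝ᵥ (((2 * (γ - 1)) • (Φbarᵀ * Dbar * Φbar) - (2 : ℝ) • Lbar).mulVec x)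
        = 2 * (γ - 1) * (x ⬝ᵥ (Φbarᵀ * Dbar * Φbar).mulVec x) - 2 * (x ⬝ᵥ Lbar.mulVec x) := by
    intro x
    rw [Matrix.sub_mulVec, Matrix.smul_mulVec, Matrix.smul_mulVec,
      dotProduct_sub, dotProduct_smul, dotProduct_smul, smul_eq_mul, smul_eq_mul]
  refine ⟨?_, ?_, ?_⟩
  · intro x
    rw [hexp1, hexp2]
    have := hblock x
    linarith
  · intro x hx
    rw [hexp2]
    have h1 := hQpos x hx
    have h2 := hLq x
    nlinarith
  · intro x hx
    rw [hexp1]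
    have := hblock x
    have h1 := hQpos x hx
    have h2 := hLq x
    nlinarith
end

section
/- Any equilibrium (θ̄_∞, w̄_∞, v̄_∞) of the system dθ̄/dt = Φ̄ᵀD̄(−I+γP̄)Φ̄θ̄ + Φ̄ᵀD̄R̄ − L̄θ̄, dw̄/dt = θ̄ − w̄ − L̄w̄ − L̄v̄, dv̄/dt = L̄w̄ satisfies: (i) the block average (1/N)∑_i θ_∞^i equals θ_c := −(ΦᵀD(−I+γP)Φ)⁻¹ΦᵀD((1/N)∑_i R_i); (ii) w̄_∞ = 𝟙_N ⊗ θ_c; (iii) L̄v̄_∞ = θ̄_∞ − w̄_∞. -/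
open Matrix
open scoped Kronecker


open Matrix
open scoped Kronecker

lemma oneKron_mulVec {N m m' : ℕ} (B : Matrix (Fin m) (Fin m') ℝ)
    (x : Fin N × Fin m' → ℝ) (i : Fin N) (k : Fin m) :
    (((1 : Matrix (Fin N) (Fin N) ℝ) ⊗ₖ B).mulVec x) (i, k)
      = B.mulVec (fun l => x (i, l)) k := by
  simp only [Matrix.mulVec, dotProduct, Fintype.sum_prod_type,
    Matrix.kroneckerMap_apply, Matrix.one_apply, ite_mul, one_mul, zero_mul]
  simp

lemma kronOne_mulVec {N m q : ℕ} (L : Matrix (Fin N) (Fin m) ℝ)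
    (x : Fin m × Fin q → ℝ) (i : Fin N) (k : Fin q) :
    ((L ⊗ₖ (1 : Matrix (Fin q) (Fin q) ℝ)).mulVec x) (i, k)
      = ∑ j, L i j * x (j, k) := by
  simp only [Matrix.mulVec, dotProduct, Fintype.sum_prod_type,
    Matrix.kroneckerMap_apply, Matrix.one_apply, mul_ite, mul_one, mul_zero, ite_mul, zero_mul]
  simp

lemma one_kron_sub {N m : ℕ} (B C : Matrix (Fin m) (Fin m) ℝ) :
    (1 : Matrix (Fin N) (Fin N) ℝ) ⊗ₖ (B - C)
      = (1 : Matrix (Fin N) (Fin N) ℝ) ⊗ₖ B - (1 : Matrix (Fin N) (Fin N) ℝ) ⊗ₖ C := by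
  ext ⟨i, k⟩ ⟨j, l⟩
  simp [Matrix.kroneckerMap_apply, mul_sub]

lemma aux_M_unit {n q : ℕ} (P : Matrix (Fin n) (Fin n) ℝ) (d : Fin n → ℝ) (γ : ℝ)
    (Φ : Matrix (Fin n) (Fin q) ℝ)
    (hPnonneg : ∀ i j, 0 ≤ P i j) (hProw : ∀ i, ∑ j, P i j = 1)
    (hdpos : ∀ i, 0 < d i) (hstat : ∀ j, ∑ i, d i * P i j = d j)
    (hγ0 : 0 < γ) (hγ1 : γ < 1) (hΦ : Function.Injective Φ.mulVec) :
    IsUnit (Φᵀ * Matrix.diagonal d * (γ • P - 1) * Φ).det := by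
  rw [← Matrix.isUnit_iff_isUnit_det, ← Matrix.mulVec_injective_iff_isUnit]
  have key : ∀ x : Fin q → ℝ,
      (Φᵀ * Matrix.diagonal d * (γ • P - 1) * Φ).mulVec x = 0 → x = 0 := by
    intro x hx
    set y := Φ.mulVec x with hy
    set T := ∑ i, d i * y i ^ 2 with hT
    set S := ∑ i, d i * (y i * P.mulVec y i) with hS
    have hq : γ * S - T = 0 := by
      have h0 : x ⬝ᵥ (Φᵀ * Matrix.diagonal d * (γ • P - 1) * Φ).mulVec x = 0 := by
        rw [hx]; simp
      have h1 : x ⬝ᵥ (Φᵀ * Matrix.diagonal d * (γ • P - 1) * Φ).mulVec x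
          = y ⬝ᵥ (Matrix.diagonal d).mulVec ((γ • P - 1).mulVec y) := by
        rw [Matrix.mul_assoc, Matrix.mul_assoc, ← Matrix.mulVec_mulVec,
          ← Matrix.mulVec_mulVec, ← Matrix.mulVec_mulVec, Matrix.dotProduct_mulVec,
          Matrix.vecMul_transpose, ← hy]
      rw [h1] at h0
      rw [← h0]
      simp only [Matrix.sub_mulVec, Matrix.smul_mulVec, Matrix.one_mulVec,
        dotProduct, Matrix.mulVec_diagonal, Pi.sub_apply, Pi.smul_apply, smul_eq_mul]
      rw [hS, hT, Finset.mul_sum, ← Finset.sum_sub_distrib]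
      apply Finset.sum_congr rfl
      intro i _
      ring
    have hST : S ≤ T := by
      have hSeq : S = ∑ i, ∑ j, d i * P i j * (y i * y j) := by
        rw [hS]
        apply Finset.sum_congr rfl
        intro i _
        simp only [Matrix.mulVec, dotProduct]
        rw [Finset.mul_sum, Finset.mul_sum]
        apply Finset.sum_congr rfl
        intro j _
        ring
      have hb : ∑ i, ∑ j, d i * P i j * (y i * y j)
          ≤ ∑ i, ∑ j, d i * P i j * ((y i ^ 2 + y j ^ 2) / 2) := by
        apply Finset.sum_le_sum
        intro i _
        apply Finset.sum_le_sum
        intro j _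
        have h1 : 0 ≤ d i * P i j := mul_nonneg (hdpos i).le (hPnonneg i j)
        nlinarith [sq_nonneg (y i - y j)]
      have h2 : ∑ i, ∑ j, d i * P i j * ((y i ^ 2 + y j ^ 2) / 2) = T := by
        have e : ∀ i j, d i * P i j * ((y i ^ 2 + y j ^ 2) / 2)
            = (d i * y i ^ 2 / 2) * P i j + d i * P i j * (y j ^ 2 / 2) := by
          intro i j; ring
        simp_rw [e, Finset.sum_add_distrib]
        have hA : ∑ i, ∑ j, (d i * y i ^ 2 / 2) * P i j = T / 2 := by
          simp_rw [← Finset.mul_sum, hProw, mul_one, hT, Finset.sum_div]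
        have hB : ∑ i, ∑ j, d i * P i j * (y j ^ 2 / 2) = T / 2 := by
          rw [Finset.sum_comm]
          simp_rw [← Finset.sum_mul, hstat, hT, Finset.sum_div]
          apply Finset.sum_congr rfl
          intro j _
          ring
        rw [hA, hB]; ring
      rw [hSeq]
      calc ∑ i, ∑ j, d i * P i j * (y i * y j)
          ≤ ∑ i, ∑ j, d i * P i j * ((y i ^ 2 + y j ^ 2) / 2) := hb
        _ = T := h2
    have hTnn : 0 ≤ T := Finset.sum_nonneg fun i _ => mul_nonneg (hdpos i).le (sq_nonneg _)
    have hT0 : T = 0 := by nlinarith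
    have hy0 : y = 0 := by
      funext i
      have hterm := (Finset.sum_eq_zero_iff_of_nonneg
        (fun i _ => mul_nonneg (hdpos i).le (sq_nonneg (y i)))).mp hT0 i (Finset.mem_univ i)
      have hd := (hdpos i).ne'
      have : y i ^ 2 = 0 := by
        rcases mul_eq_zero.mp hterm with h | h
        · exact absurd h hd
        · exact h
      exact pow_eq_zero_iff two_ne_zero |>.mp this
    have : Φ.mulVec x = Φ.mulVec 0 := by rw [← hy, hy0, Matrix.mulVec_zero]
    exact hΦ this
  intro x x' hxx'
  have : (Φᵀ * Matrix.diagonal d * (γ • P - 1) * Φ).mulVec (x - x') = 0 := by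
    rw [Matrix.mulVec_sub, hxx', sub_self]
  have := key _ this
  exact sub_eq_zero.mp this


/-- Any equilibrium `(θ̄_∞, w̄_∞, v̄_∞)` of the distributed DP version 2 system
satisfies: (i) the block average of `θ̄_∞` equals `θ_c`; (ii) `w̄_∞ = 𝟙_N ⊗ θ_c`;
(iii) `L̄v̄_∞ = θ̄_∞ − w̄_∞`, where `θ_c = −(ΦᵀD(−I+γP)Φ)⁻¹ΦᵀD((1/N)∑_i R_i)`. -/
theorem stmt12 (n q N : ℕ) (hN : 0 < N)
    (P : Matrix (Fin n) (Fin n) ℝ) (d : Fin n → ℝ) (γ : ℝ)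
    (Φ : Matrix (Fin n) (Fin q) ℝ) (R : Fin N → (Fin n → ℝ))
    (hPnonneg : ∀ i j, 0 ≤ P i j) (hProw : ∀ i, ∑ j, P i j = 1)
    (hdpos : ∀ i, 0 < d i) (hstat : ∀ j, ∑ i, d i * P i j = d j)
    (hγ0 : 0 < γ) (hγ1 : γ < 1)
    (hΦ : Function.Injective Φ.mulVec)
    (D : Matrix (Fin n) (Fin n) ℝ) (hD : D = Matrix.diagonal d)
    (L : Matrix (Fin N) (Fin N) ℝ)
    (hsym : Lᵀ = L)
    (hpsd : ∀ y : Fin N → ℝ, 0 ≤ y ⬝ᵥ L.mulVec y)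
    (hnull : ∀ y : Fin N → ℝ, L.mulVec y = 0 ↔ ∃ c : ℝ, y = fun _ => c)
    (Φbar : Matrix (Fin N × Fin n) (Fin N × Fin q) ℝ)
    (hΦbar : Φbar = (1 : Matrix (Fin N) (Fin N) ℝ) ⊗ₖ Φ)
    (Dbar : Matrix (Fin N × Fin n) (Fin N × Fin n) ℝ)
    (hDbar : Dbar = (1 : Matrix (Fin N) (Fin N) ℝ) ⊗ₖ D)
    (Pbar : Matrix (Fin N × Fin n) (Fin N × Fin n) ℝ)
    (hPbar : Pbar = (1 : Matrix (Fin N) (Fin N) ℝ) ⊗ₖ P)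
    (Lbar : Matrix (Fin N × Fin q) (Fin N × Fin q) ℝ)
    (hLbar : Lbar = L ⊗ₖ (1 : Matrix (Fin q) (Fin q) ℝ))
    (Rbar : Fin N × Fin n → ℝ) (hRbar : Rbar = fun p => R p.1 p.2)
    (θc : Fin q → ℝ)
    (hθc : θc = -((Φᵀ * D * (γ • P - 1) * Φ)⁻¹.mulVec
        ((Φᵀ * D).mulVec ((N : ℝ)⁻¹ • ∑ i, R i))))
    (θinf winf vinf : Fin N × Fin q → ℝ)
    (heq1 : (Φbarᵀ * Dbar * (γ • Pbar - 1) * Φbar).mulVec θinf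
        + Φbarᵀ.mulVec (Dbar.mulVec Rbar) - Lbar.mulVec θinf = 0)
    (heq2 : θinf - winf - Lbar.mulVec winf - Lbar.mulVec vinf = 0)
    (heq3 : Lbar.mulVec winf = 0) :
    ((N : ℝ)⁻¹ • ∑ i, (fun k => θinf (i, k)) = θc)
    ∧ winf = (fun p => θc p.2)
    ∧ Lbar.mulVec vinf = θinf - winf := by
  subst hD hΦbar hDbar hPbar hLbar hRbar
  have hN' : (N : ℝ) ≠ 0 := Nat.cast_ne_zero.mpr hN.ne'
  have hMunit := aux_M_unit P d γ Φ hPnonneg hProw hdpos hstat hγ0 hγ1 hΦ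
  have hΦT : ((1 : Matrix (Fin N) (Fin N) ℝ) ⊗ₖ Φ)ᵀ
      = (1 : Matrix (Fin N) (Fin N) ℝ) ⊗ₖ Φᵀ := by
    rw [← Matrix.kroneckerMap_transpose, Matrix.transpose_one]
  have hsub : γ • ((1 : Matrix (Fin N) (Fin N) ℝ) ⊗ₖ P) - 1
      = (1 : Matrix (Fin N) (Fin N) ℝ) ⊗ₖ (γ • P - 1) := by
    rw [one_kron_sub, Matrix.kronecker_smul, Matrix.one_kronecker_one]
  have hMbar : ((1 : Matrix (Fin N) (Fin N) ℝ) ⊗ₖ Φ)ᵀ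
        * ((1 : Matrix (Fin N) (Fin N) ℝ) ⊗ₖ Matrix.diagonal d)
        * (γ • ((1 : Matrix (Fin N) (Fin N) ℝ) ⊗ₖ P) - 1)
        * ((1 : Matrix (Fin N) (Fin N) ℝ) ⊗ₖ Φ)
      = (1 : Matrix (Fin N) (Fin N) ℝ) ⊗ₖ (Φᵀ * Matrix.diagonal d * (γ • P - 1) * Φ) := by
    rw [hΦT, hsub]
    simp only [← Matrix.mul_kronecker_mul, Matrix.one_mul]
  have hTD : ((1 : Matrix (Fin N) (Fin N) ℝ) ⊗ₖ Φ)ᵀ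
        * ((1 : Matrix (Fin N) (Fin N) ℝ) ⊗ₖ Matrix.diagonal d)
      = (1 : Matrix (Fin N) (Fin N) ℝ) ⊗ₖ (Φᵀ * Matrix.diagonal d) := by
    rw [hΦT, ← Matrix.mul_kronecker_mul, Matrix.one_mul]
  rw [hMbar, Matrix.mulVec_mulVec, hTD] at heq1
  have hblock : ∀ (i : Fin N) (k : Fin q),
      (Φᵀ * Matrix.diagonal d * (γ • P - 1) * Φ).mulVec (fun l => θinf (i, l)) k
        + (Φᵀ * Matrix.diagonal d).mulVec (R i) k - ∑ j, L i j * θinf (j, k) = 0 := by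
    intro i k
    have h := congr_fun heq1 (i, k)
    simp only [Pi.add_apply, Pi.sub_apply, Pi.zero_apply] at h
    rw [oneKron_mulVec, oneKron_mulVec, kronOne_mulVec] at h
    exact h
  have hone : L.mulVec (fun _ => (1 : ℝ)) = 0 := (hnull _).mpr ⟨1, rfl⟩
  have hcol : ∀ j, ∑ i, L i j = 0 := by
    intro j
    have h := congr_fun hone j
    simp only [Matrix.mulVec, dotProduct, mul_one, Pi.zero_apply] at h
    calc ∑ i, L i j = ∑ i, L j i := by
          refine Finset.sum_congr rfl fun i _ => ?_
          exact congr_fun (congr_fun hsym j) i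
      _ = 0 := h
  have hsum : ∀ k, (Φᵀ * Matrix.diagonal d * (γ • P - 1) * Φ).mulVec
        (fun l => ∑ i, θinf (i, l)) k
      + (Φᵀ * Matrix.diagonal d).mulVec (∑ i, R i) k = 0 := by
    intro k
    have h1 : (Φᵀ * Matrix.diagonal d * (γ • P - 1) * Φ).mulVec
          (fun l => ∑ i, θinf (i, l)) k
        = ∑ i, (Φᵀ * Matrix.diagonal d * (γ • P - 1) * Φ).mulVec
          (fun l => θinf (i, l)) k := by
      simp only [Matrix.mulVec, dotProduct, Finset.mul_sum]
      rw [Finset.sum_comm]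
    have h2 : (Φᵀ * Matrix.diagonal d).mulVec (∑ i, R i) k
        = ∑ i, (Φᵀ * Matrix.diagonal d).mulVec (R i) k := by
      simp only [Matrix.mulVec, dotProduct, Finset.sum_apply, Finset.mul_sum]
      rw [Finset.sum_comm]
    have h3 : ∑ i, ∑ j, L i j * θinf (j, k) = 0 := by
      rw [Finset.sum_comm]
      refine Finset.sum_eq_zero fun j _ => ?_
      rw [← Finset.sum_mul, hcol j, zero_mul]
    rw [h1, h2, ← Finset.sum_add_distrib]
    have h4 : ∑ i, ((Φᵀ * Matrix.diagonal d * (γ • P - 1) * Φ).mulVec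
          (fun l => θinf (i, l)) k + (Φᵀ * Matrix.diagonal d).mulVec (R i) k)
        = ∑ i, ∑ j, L i j * θinf (j, k) := by
      refine Finset.sum_congr rfl fun i _ => ?_
      have := hblock i k
      linarith
    rw [h4, h3]
  have hMs : (Φᵀ * Matrix.diagonal d * (γ • P - 1) * Φ).mulVec (fun l => ∑ i, θinf (i, l))
      = -((Φᵀ * Matrix.diagonal d).mulVec (∑ i, R i)) := by
    funext k
    have := hsum k
    simp only [Pi.neg_apply]
    linarith
  have hi : (N : ℝ)⁻¹ • ∑ i, (fun k => θinf (i, k)) = θc := by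
    have hsumfun : (∑ i, (fun k => θinf (i, k))) = fun l => ∑ i, θinf (i, l) := by
      funext l
      simp [Finset.sum_apply]
    rw [hsumfun, hθc]
    have hinv : (fun l => ∑ i, θinf (i, l))
        = (Φᵀ * Matrix.diagonal d * (γ • P - 1) * Φ)⁻¹.mulVec
            (-((Φᵀ * Matrix.diagonal d).mulVec (∑ i, R i))) := by
      rw [← hMs, Matrix.mulVec_mulVec, Matrix.nonsing_inv_mul _ hMunit, Matrix.one_mulVec]
    rw [hinv, Matrix.mulVec_neg, Matrix.mulVec_smul, Matrix.mulVec_smul, smul_neg]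
  have hiii : (L ⊗ₖ (1 : Matrix (Fin q) (Fin q) ℝ)).mulVec vinf = θinf - winf := by
    rw [heq3, sub_zero] at heq2
    exact (sub_eq_zero.mp heq2).symm
  have hwconst : ∀ (i : Fin N) (k : Fin q), winf (i, k) = winf (⟨0, hN⟩, k) := by
    intro i k
    have hLw : L.mulVec (fun j => winf (j, k)) = 0 := by
      funext i'
      have h := congr_fun heq3 (i', k)
      rw [kronOne_mulVec] at h
      simpa [Matrix.mulVec, dotProduct] using h
    obtain ⟨c, hc⟩ := (hnull _).mp hLw
    rw [show winf (i, k) = c from congr_fun hc i,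
      show winf (⟨0, hN⟩, k) = c from congr_fun hc ⟨0, hN⟩]
  have hsumw : ∀ k, ∑ i, θinf (i, k) = ∑ i, winf (i, k) := by
    intro k
    have h0 : ∑ i, ((L ⊗ₖ (1 : Matrix (Fin q) (Fin q) ℝ)).mulVec vinf) (i, k) = 0 := by
      simp only [kronOne_mulVec]
      rw [Finset.sum_comm]
      refine Finset.sum_eq_zero fun j _ => ?_
      rw [← Finset.sum_mul, hcol j, zero_mul]
    have h2 : ∑ i, (θinf (i, k) - winf (i, k)) = 0 := by
      rw [← h0]
      refine Finset.sum_congr rfl fun i _ => ?_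
      rw [hiii]
      rfl
    rw [Finset.sum_sub_distrib] at h2
    linarith
  have hw0 : ∀ k, winf (⟨0, hN⟩, k) = θc k := by
    intro k
    have ht := congr_fun hi k
    simp only [Pi.smul_apply, Finset.sum_apply, smul_eq_mul] at ht
    have hw : ∑ i, winf (i, k) = (N : ℝ) * winf (⟨0, hN⟩, k) := by
      have h5 : ∑ i : Fin N, winf (i, k) = ∑ _i : Fin N, winf (⟨0, hN⟩, k) :=
        Finset.sum_congr rfl fun i _ => hwconst i k
      rw [h5]
      simp [Finset.sum_const, Finset.card_univ, nsmul_eq_mul]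
    rw [hsumw k, hw, ← mul_assoc, inv_mul_cancel₀ hN', one_mul] at ht
    exact ht
  refine ⟨hi, ?_, hiii⟩
  funext p
  rcases p with ⟨i, k⟩
  rw [hwconst i k, hw0 k]
end
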